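/- For every real β > 1, the limit lim_{P→∞} ( μ̄₀(P) − ln P ) exists and equals −(β−1)·ln((β−1)/β) − 1. -/
import Mathlib


open Filter Topology

/-- `a = (√β − 1)²`. -/
noncomputable def a (β : ℝ) : ℝ := (Real.sqrt β - 1) ^ 2

/-- `b = (√β + 1)²`. -/
noncomputable def b (β : ℝ) : ℝ := (Real.sqrt β + 1) ^ 2

/-- The leading-order asymptotic mean `μ̄₀(P)`. -/
noncomputable def mubar₀ (β P : ℝ) : ℝ :=
  ((a β + b β) / 2) *
      Real.log ((Real.sqrt (β + a β * P) + Real.sqrt (β + b β * P)) / (2 * Real.sqrt β)) -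
    Real.sqrt (a β * b β) *
      Real.log ((Real.sqrt (a β * (β + b β * P)) + Real.sqrt (b β * (β + a β * P))) /
        (Real.sqrt (a β * β) + Real.sqrt (b β * β))) -
    (Real.sqrt (β + a β * P) - Real.sqrt (β + b β * P)) ^ 2 / (4 * P)

/-- rescaled version: `mubar₀ β P - log P = Faux β (β/P)` for `P > 0`. -/
noncomputable def Faux (β t : ℝ) : ℝ :=
  (β + 1) * Real.log ((Real.sqrt (t + a β) + Real.sqrt (t + b β)) / (2 * Real.sqrt β)) -
    (β - 1) * Real.log ((Real.sqrt (a β * (t + b β)) + Real.sqrt (b β * (t + a β))) / (2 * β)) -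
    (Real.sqrt (t + a β) - Real.sqrt (t + b β)) ^ 2 / 4

theorem stmt9 (β : ℝ) (hβ : 1 < β) :
    Tendsto (fun P => mubar₀ β P - Real.log P) atTop
      (𝓝 (-(β - 1) * Real.log ((β - 1) / β) - 1)) := by
  have hβ0 : (0:ℝ) < β := by linarith
  have hs1 : 1 < Real.sqrt β := by
    have := Real.sqrt_lt_sqrt (by norm_num : (0:ℝ) ≤ 1) hβ
    simpa using this
  have hsqβ : Real.sqrt β * Real.sqrt β = β := Real.mul_self_sqrt hβ0.le
  have hA : 0 < a β := pow_pos (by linarith) 2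
  have hB : 0 < b β := by unfold b; positivity
  have hsa : Real.sqrt (a β) = Real.sqrt β - 1 := Real.sqrt_sq (by linarith)
  have hsb : Real.sqrt (b β) = Real.sqrt β + 1 := Real.sqrt_sq (by linarith)
  have hab : (a β + b β) / 2 = β + 1 := by unfold a b; linear_combination hsqβ
  have hsab : Real.sqrt (a β * b β) = β - 1 := by
    rw [Real.sqrt_mul hA.le, hsa, hsb]; linear_combination hsqβ
  have h2sβ : 0 < 2 * Real.sqrt β := by linarith
  -- limit of β/P
  have hlim : Tendsto (fun P : ℝ => β / P) atTop (𝓝 0) := by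
    have := (tendsto_inv_atTop_zero : Tendsto (fun x : ℝ => x⁻¹) atTop (𝓝 0)).const_mul β
    simpa [div_eq_mul_inv] using this
  -- continuity of Faux at 0
  have hval1 : (Real.sqrt (0 + a β) + Real.sqrt (0 + b β)) / (2 * Real.sqrt β) ≠ 0 := by
    have h1 : 0 < Real.sqrt (0 + b β) := Real.sqrt_pos.2 (by simpa using hB)
    have h2 : 0 ≤ Real.sqrt (0 + a β) := Real.sqrt_nonneg _
    exact ne_of_gt (div_pos (by linarith) h2sβ)
  have hval2 : (Real.sqrt (a β * (0 + b β)) + Real.sqrt (b β * (0 + a β))) / (2 * β) ≠ 0 := by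
    have h1 : 0 < Real.sqrt (a β * (0 + b β)) := Real.sqrt_pos.2 (by rw [zero_add]; positivity)
    have h2 : 0 ≤ Real.sqrt (b β * (0 + a β)) := Real.sqrt_nonneg _
    exact ne_of_gt (div_pos (by linarith) (by linarith))
  have hFcont : ContinuousAt (Faux β) 0 := by
    unfold Faux
    apply ContinuousAt.sub
    apply ContinuousAt.sub
    · exact continuousAt_const.mul (ContinuousAt.log (by fun_prop) hval1)
    · exact continuousAt_const.mul (ContinuousAt.log (by fun_prop) hval2)
    · exact ContinuousAt.div_const (by fun_prop) 4
  -- value of Faux at 0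
  have hF0 : Faux β 0 = -(β - 1) * Real.log ((β - 1) / β) - 1 := by
    unfold Faux
    rw [zero_add, zero_add, hsa, hsb, hsab,
      show Real.sqrt (b β * a β) = β - 1 by rw [mul_comm]; exact hsab,
      show (Real.sqrt β - 1 + (Real.sqrt β + 1)) / (2 * Real.sqrt β) = 1 by
        rw [div_eq_one_iff_eq (ne_of_gt h2sβ)]; ring,
      Real.log_one,
      show (β - 1 + (β - 1)) / (2 * β) = (β - 1) / β by
        rw [div_eq_div_iff (by linarith) (by linarith)]; ring,
      show (Real.sqrt β - 1 - (Real.sqrt β + 1)) ^ 2 = 4 by ring]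
    ring
  -- eventual equality
  have hiff : (fun P => Faux β (β / P)) =ᶠ[atTop] fun P => mubar₀ β P - Real.log P := by
    filter_upwards [eventually_gt_atTop (0:ℝ)] with P hP
    have ht0 : 0 < β / P := div_pos hβ0 hP
    set t := β / P with htdef
    have hPt : P * t = β := by rw [htdef]; field_simp
    have e2 : a β * (β + b β * P) = P * (a β * (t + b β)) := by
      linear_combination (a β) * hPt.symm
    have e2b : b β * (β + a β * P) = P * (b β * (t + a β)) := by
      linear_combination (b β) * hPt.symm
    have e1 : β + a β * P = P * (t + a β) := by linear_combination hPt.symm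
    have e1b : β + b β * P = P * (t + b β) := by linear_combination hPt.symm
    have hden : Real.sqrt (a β * β) + Real.sqrt (b β * β) = 2 * β := by
      rw [Real.sqrt_mul hA.le, Real.sqrt_mul hB.le, hsa, hsb]
      linear_combination 2 * hsqβ
    have hsP : 0 < Real.sqrt P := Real.sqrt_pos.2 hP
    have hsq : Real.sqrt P * Real.sqrt P = P := Real.mul_self_sqrt hP.le
    have hta : 0 < t + a β := by linarith
    have htb : 0 < t + b β := by linarith
    have hX : 0 < Real.sqrt (t + a β) := Real.sqrt_pos.2 hta
    have hY : 0 < Real.sqrt (t + b β) := Real.sqrt_pos.2 htb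
    have hU : 0 < Real.sqrt (a β * (t + b β)) := Real.sqrt_pos.2 (by positivity)
    have hV : 0 < Real.sqrt (b β * (t + a β)) := Real.sqrt_pos.2 (by positivity)
    unfold mubar₀ Faux
    rw [hab, hsab, hden, e2, e2b, e1, e1b,
      Real.sqrt_mul hP.le, Real.sqrt_mul hP.le, Real.sqrt_mul hP.le, Real.sqrt_mul hP.le]
    have l1 : Real.log ((Real.sqrt P * Real.sqrt (t + a β) + Real.sqrt P * Real.sqrt (t + b β)) /
          (2 * Real.sqrt β))
        = Real.log P / 2 +
          Real.log ((Real.sqrt (t + a β) + Real.sqrt (t + b β)) / (2 * Real.sqrt β)) := by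
      rw [show (Real.sqrt P * Real.sqrt (t + a β) + Real.sqrt P * Real.sqrt (t + b β)) /
            (2 * Real.sqrt β)
          = Real.sqrt P * ((Real.sqrt (t + a β) + Real.sqrt (t + b β)) / (2 * Real.sqrt β)) by
            ring,
        Real.log_mul hsP.ne' (ne_of_gt (div_pos (by linarith) h2sβ)), Real.log_sqrt hP.le]
    have l2 : Real.log ((Real.sqrt P * Real.sqrt (a β * (t + b β)) +
            Real.sqrt P * Real.sqrt (b β * (t + a β))) / (2 * β))
        = Real.log P / 2 +
          Real.log ((Real.sqrt (a β * (t + b β)) + Real.sqrt (b β * (t + a β))) / (2 * β)) := by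
      rw [show (Real.sqrt P * Real.sqrt (a β * (t + b β)) +
            Real.sqrt P * Real.sqrt (b β * (t + a β))) / (2 * β)
          = Real.sqrt P *
            ((Real.sqrt (a β * (t + b β)) + Real.sqrt (b β * (t + a β))) / (2 * β)) by ring,
        Real.log_mul hsP.ne' (ne_of_gt (div_pos (by linarith) (by linarith))), Real.log_sqrt hP.le]
    have l3 : (Real.sqrt P * Real.sqrt (t + a β) - Real.sqrt P * Real.sqrt (t + b β)) ^ 2 / (4 * P)
        = (Real.sqrt (t + a β) - Real.sqrt (t + b β)) ^ 2 / 4 := by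
      rw [div_eq_div_iff (by linarith) (by norm_num)]
      linear_combination 4 * (Real.sqrt (t + a β) - Real.sqrt (t + b β)) ^ 2 * hsq
    rw [l1, l2, l3]
    ring
  have h := (hFcont.tendsto.comp hlim)
  rw [hF0] at h
  exact h.congr' hiff
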